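/- arXiv:math/9606228 — 2 statements merged into one kernel-verified Lean document; each statement's English description precedes it below -/
import Mathlib

section
/- If 𝒜 ⊆ Q⊚ is a maximal antichain, n ∈ ω, and a is a finite subset of 2^{<ω}, then there is a finite set A ⊆ 𝒜 such that for every w ⊆ 2^ω with |w| = n there is r ∈ A compatible with ⟨a,w⟩ in Q⊚. -/
/-- Restriction `η↾l` of `η ∈ 2^ω` to its first `l` entries, as a finite binary sequence. -/
def restrict (η : ℕ → Bool) (l : ℕ) : List Bool := List.ofFn (fun i : Fin l => η i)

/-- Conditions of the forcing notion `Q⊚`: pairs `⟨a, w⟩` with `a` a finite set of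
finite binary sequences and `w` a finite set of elements of Cantor space. -/
abbrev QCirc : Type := Finset (List Bool) × Finset (ℕ → Bool)

/-- The order of `Q⊚` (a stronger condition is the greater one). -/
def QCirc.le (p q : QCirc) : Prop :=
  p.1 ⊆ q.1 ∧ p.2 ⊆ q.2 ∧
    ∀ η ∈ p.2, ∀ l : ℕ, restrict η l ∈ q.1 → restrict η l ∈ p.1

/-- Compatibility in a forcing notion: a common upper bound exists. -/
def PCompat {P : Type} (le : P → P → Prop) (p q : P) : Prop :=
  ∃ r, le p r ∧ le q r


/-- A set `A ⊆ P` is an antichain if its elements are pairwise incompatible. -/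
def PAntichain {P : Type} (le : P → P → Prop) (A : Set P) : Prop :=
  ∀ p ∈ A, ∀ q ∈ A, p ≠ q → ¬ PCompat le p q

/-- A maximal antichain: an antichain such that every condition is compatible
with some of its members. -/
def PMaxAntichain {P : Type} (le : P → P → Prop) (A : Set P) : Prop :=
  PAntichain le A ∧ ∀ p : P, ∃ q ∈ A, PCompat le p q

/-!
Compatibility of `⟨a, w⟩` with a fixed condition `⟨b, v⟩` depends on each `η ∈ w` only through
its restriction to the lengths occurring in `b`, so it persists when every `η ∈ w` is replaced by
a sequence agreeing with it below `N > max {|s| : s ∈ b}`. Enumerating `w` as a point of the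
compact space `(2^ω)^n` and choosing for each point a member of `𝒜` compatible with `⟨a, w⟩`,
these agreement conditions define an open cover of `(2^ω)^n`; a finite subcover yields `A`.
-/

lemma length_restrict (η : ℕ → Bool) (l : ℕ) : (restrict η l).length = l :=
  List.length_ofFn

lemma restrict_congr {η η' : ℕ → Bool} {l N : ℕ} (hl : l ≤ N) (h : ∀ k < N, η k = η' k) :
    restrict η l = restrict η' l :=
  congrArg List.ofFn (funext fun k => h k (lt_of_lt_of_le k.isLt hl))

namespace QCirc

lemma pcompat_iff {a b : Finset (List Bool)} {w v : Finset (ℕ → Bool)} :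
    PCompat QCirc.le (a, w) (b, v) ↔
      (∀ η ∈ w, ∀ l, restrict η l ∈ b → restrict η l ∈ a) ∧
      (∀ η ∈ v, ∀ l, restrict η l ∈ a → restrict η l ∈ b) := by
  classical
  constructor
  · rintro ⟨_, ⟨hac, -, hw⟩, ⟨hbc, -, hv⟩⟩
    exact ⟨fun η hη l hl => hw η hη l (hbc hl), fun η hη l hl => hv η hη l (hac hl)⟩
  · rintro ⟨hw, hv⟩
    refine ⟨(a ∪ b, w ∪ v), ⟨Finset.subset_union_left, Finset.subset_union_left, ?_⟩,
      ⟨Finset.subset_union_right, Finset.subset_union_right, ?_⟩⟩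
    · intro η hη l hl
      exact (Finset.mem_union.1 hl).elim id (hw η hη l)
    · intro η hη l hl
      exact (Finset.mem_union.1 hl).elim (hv η hη l) id

lemma pcompat_of_agree {a b : Finset (List Bool)} {w w' v : Finset (ℕ → Bool)} {N : ℕ}
    (h : PCompat QCirc.le (a, w) (b, v)) (hN : ∀ s ∈ b, s.length < N)
    (hw' : ∀ η' ∈ w', ∃ η ∈ w, ∀ k < N, η' k = η k) :
    PCompat QCirc.le (a, w') (b, v) := by
  obtain ⟨hw, hv⟩ := pcompat_iff.1 h
  refine pcompat_iff.2 ⟨fun η' hη' l hl => ?_, hv⟩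
  obtain ⟨η, hη, hagree⟩ := hw' η' hη'
  have hlN : l ≤ N := by simpa only [length_restrict] using (hN _ hl).le
  rw [restrict_congr hlN hagree] at hl ⊢
  exact hw η hη l hl

end QCirc

lemma exists_finset_forall_exists_agree {ι : Type*} [Finite ι] (N : (ι → ℕ → Bool) → ℕ) :
    ∃ T : Finset (ι → ℕ → Bool),
      ∀ u : ι → ℕ → Bool, ∃ u₀ ∈ T, ∀ i, ∀ k < N u₀, u i k = u₀ i k := by
  let U : (ι → ℕ → Bool) → Set (ι → ℕ → Bool) :=
    fun u₀ => ⋂ i, ⋂ k ∈ Set.Iio (N u₀), {u | u i k = u₀ i k}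
  have hU : ∀ u₀, IsOpen (U u₀) := fun u₀ =>
    isOpen_iInter_of_finite fun i => (Set.finite_Iio _).isOpen_biInter fun k _ =>
      (isOpen_discrete ({u₀ i k} : Set Bool)).preimage
        (by fun_prop : Continuous fun u : ι → ℕ → Bool => u i k)
  obtain ⟨T, hT⟩ := isCompact_univ.elim_finite_subcover U hU
    fun u _ => Set.mem_iUnion.2 ⟨u, by simp [U]⟩
  refine ⟨T, fun u => ?_⟩
  obtain ⟨u₀, hu₀, hu⟩ := Set.mem_iUnion₂.1 (hT (Set.mem_univ u))
  exact ⟨u₀, hu₀, by simpa [U] using hu⟩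

lemma Finset.exists_image_univ_eq_of_card_eq {α : Type*} [DecidableEq α] {s : Finset α} {n : ℕ}
    (hs : s.card = n) : ∃ u : Fin n → α, Finset.univ.image u = s := by
  obtain e := s.equivFinOfCardEq hs
  refine ⟨fun i => e.symm i, Finset.ext fun x => ?_⟩
  simp only [Finset.mem_image, Finset.mem_univ, true_and]
  exact ⟨by rintro ⟨i, rfl⟩; exact (e.symm i).2, fun hx => ⟨e ⟨x, hx⟩, by simp⟩⟩

/-- For every maximal antichain `𝒜` of `Q⊚`, `n ∈ ω` and finite `a ⊆ 2^{<ω}` there is a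
finite `A ⊆ 𝒜` such that every condition `⟨a,w⟩` with `|w| = n` is compatible with
some member of `A`. -/
theorem qcirc_maxantichain_finite_trace
    (𝒜 : Set QCirc) (h𝒜 : PMaxAntichain QCirc.le 𝒜) (n : ℕ) (a : Finset (List Bool)) :
    ∃ A : Finset QCirc, ↑A ⊆ 𝒜 ∧
      ∀ w : Finset (ℕ → Bool), w.card = n → ∃ r ∈ A, PCompat QCirc.le (a, w) r := by
  classical
  choose q hq𝒜 hqc using fun u : Fin n → ℕ → Bool => h𝒜.2 (a, Finset.univ.image u)
  obtain ⟨T, hT⟩ := exists_finset_forall_exists_agree fun u => (q u).1.sup List.length + 1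
  refine ⟨T.image q, by simpa [Set.subset_def] using fun u _ => hq𝒜 u, fun w hw => ?_⟩
  obtain ⟨u, rfl⟩ := Finset.exists_image_univ_eq_of_card_eq hw
  obtain ⟨u₀, hu₀, hagree⟩ := hT u
  refine ⟨q u₀, Finset.mem_image_of_mem q hu₀, QCirc.pcompat_of_agree (hqc u₀)
    (fun s hs => Nat.lt_succ_of_le (Finset.le_sup hs)) ?_⟩
  simp only [Finset.mem_image, Finset.mem_univ, true_and, forall_exists_index,
    forall_apply_eq_imp_iff]
  exact fun i => ⟨u₀ i, ⟨i, rfl⟩, hagree i⟩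
end

section
/- If the cardinality of the continuum is greater than ℵ₁, then there exists a σ-centered forcing notion of cardinality ℵ₁ which cannot be completely embedded into any ccc Souslin forcing notion. -/
/-- Compatibility of two elements within the set of conditions `Q` of a Souslin forcing:
a common upper bound belonging to `Q` exists. -/
def QCompat (Q : Set (ℕ → ℕ)) (le : (ℕ → ℕ) → (ℕ → ℕ) → Prop) (p q : ℕ → ℕ) : Prop :=
  ∃ r ∈ Q, le p r ∧ le q r

/-- A ccc Souslin forcing notion: the set of conditions is an analytic subset `Q` of Baire
space, the order and incompatibility relations (restricted to `Q`) are analytic subsets of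
`ω^ω × ω^ω`, `≤` partially orders `Q`, and every antichain is countable. -/
structure SouslinCCC where
  /-- the set of conditions -/
  Q : Set (ℕ → ℕ)
  /-- the order relation -/
  le : (ℕ → ℕ) → (ℕ → ℕ) → Prop
  analytic_cond : MeasureTheory.AnalyticSet Q
  analytic_le : MeasureTheory.AnalyticSet
    {x : (ℕ → ℕ) × (ℕ → ℕ) | x.1 ∈ Q ∧ x.2 ∈ Q ∧ le x.1 x.2}
  analytic_incompat : MeasureTheory.AnalyticSet
    {x : (ℕ → ℕ) × (ℕ → ℕ) | x.1 ∈ Q ∧ x.2 ∈ Q ∧ ¬ QCompat Q le x.1 x.2}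
  refl : ∀ p ∈ Q, le p p
  trans : ∀ p ∈ Q, ∀ q ∈ Q, ∀ r ∈ Q, le p q → le q r → le p r
  antisymm : ∀ p ∈ Q, ∀ q ∈ Q, le p q → le q p → p = q
  ccc : ∀ S ⊆ Q, (∀ p ∈ S, ∀ q ∈ S, p ≠ q → ¬ QCompat Q le p q) → S.Countable

/-- A maximal antichain of a Souslin forcing notion. -/
def SouslinCCC.MaxAntichain (T : SouslinCCC) (A : Set (ℕ → ℕ)) : Prop :=
  A ⊆ T.Q ∧ (∀ p ∈ A, ∀ q ∈ A, p ≠ q → ¬ QCompat T.Q T.le p q) ∧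
    ∀ p ∈ T.Q, ∃ q ∈ A, QCompat T.Q T.le p q

/-- A complete embedding of a forcing notion `(P, leP)` into a ccc Souslin forcing notion
`T`: it is order preserving, preserves incompatibility in both directions, and maps maximal
antichains of `P` onto maximal antichains of `T`. -/
def CompleteEmbedding {P : Type} (leP : P → P → Prop) (T : SouslinCCC)
    (e : P → (ℕ → ℕ)) : Prop :=
  (∀ p : P, e p ∈ T.Q) ∧
  (∀ p q : P, leP p q → T.le (e p) (e q)) ∧
  (∀ p q : P, ¬ PCompat leP p q ↔ ¬ QCompat T.Q T.le (e p) (e q)) ∧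
  (∀ A : Set P, PMaxAntichain leP A → T.MaxAntichain (e '' A))

/-- A forcing notion is σ-centered if it is the union of countably many centered subsets,
where a subset is centered if each of its finite subsets has a common upper bound. -/
def PSigmaCentered {P : Type} (le : P → P → Prop) : Prop :=
  ∃ C : ℕ → Set P, (∀ p, ∃ n, p ∈ C n) ∧
    ∀ n, ∀ F : Finset P, ↑F ⊆ C n → ∃ r, ∀ p ∈ F, le p r


/-!
Fix reals `x i` (`i < ω₁`) coding well-founded trees `S i` such that every well-founded tree
embeds into some `S i`. Let `P` be the forcing adding a real eventually different from every
`x i`: a condition is a stem together with finitely many `x i` that later entries must avoid.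
It is σ-centered (conditions with the same stem are compatible) and has size `ℵ₁`.

Suppose `e` completely embeds `P` into a ccc Souslin forcing `Q`, and let `B` be the set of reals
`y` for which some `q ∈ Q` is compatible with `e (s, ∅)` exactly when the stem `s` avoids `y`.
Since the order and the incompatibility of `Q` are analytic, so is `B`. Each `x i` lies in `B`
(take `q = e (∅, {i})`). Conversely each `y ∈ B` is eventually covered by finitely many `x i`,
since otherwise a maximal antichain of conditions whose stems hit `y` would be sent to a maximal
antichain of `Q` all of whose members are incompatible with `q`; hence `y` codes a well-founded
tree. So the codes of the trees that embed into a tree coded in `B` are exactly the codes of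
well-founded trees. That set would then be analytic, which a diagonal argument against a
universal analytic set rules out.
-/

noncomputable section

open MeasureTheory Filter Topology

/-! ### Initial segments and trees -/

def initSeg (z : ℕ → ℕ) (k : ℕ) : List ℕ := List.ofFn fun i : Fin k => z i

@[simp] lemma length_initSeg (z : ℕ → ℕ) (k : ℕ) : (initSeg z k).length = k := by
  simp [initSeg]

@[simp] lemma getElem_initSeg (z : ℕ → ℕ) {k j : ℕ} (h : j < (initSeg z k).length) :
    (initSeg z k)[j] = z j := by
  simp [initSeg]

lemma getD_initSeg (z : ℕ → ℕ) {k j : ℕ} (h : j < k) : (initSeg z k).getD j 0 = z j := by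
  rw [List.getD_eq_getElem _ _ (by simpa using h), getElem_initSeg]

lemma take_initSeg (z : ℕ → ℕ) {j k : ℕ} (h : j ≤ k) : (initSeg z k).take j = initSeg z j :=
  List.ext_getElem (by simp [h]) fun i _ _ => by simp

lemma initSeg_prefix_initSeg (z : ℕ → ℕ) {j k : ℕ} (h : j ≤ k) : initSeg z j <+: initSeg z k :=
  take_initSeg z h ▸ List.take_prefix _ _

lemma initSeg_injective (z : ℕ → ℕ) : Function.Injective (initSeg z) := fun j k h => by
  simpa using congrArg List.length h

lemma initSeg_succ_eq_concat (z : ℕ → ℕ) (k : ℕ) : initSeg z (k + 1) = initSeg z k ++ [z k] := by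
  rw [initSeg, List.ofFn_succ', List.concat_eq_append]
  rfl

lemma initSeg_succ (z : ℕ → ℕ) (k : ℕ) :
    initSeg z (k + 1) = z 0 :: initSeg (fun j => z (j + 1)) k := by
  simp [initSeg, List.ofFn_succ]

lemma initSeg_eq_self_of_getD (z : ℕ → ℕ) (s : List ℕ) (h : ∀ j < s.length, z j = s.getD j 0) :
    initSeg z s.length = s :=
  List.ext_getElem (by simp) fun j hj _ => by
    rw [getElem_initSeg, h j (by simpa using hj), List.getD_eq_getElem]

lemma tendsto_of_initSeg_eq {w : ℕ → ℕ → ℕ} {z : ℕ → ℕ} (h : ∀ k, initSeg (w k) k = initSeg z k) :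
    Tendsto w atTop (𝓝 z) := by
  refine tendsto_pi_nhds.2 fun j => tendsto_nhds_of_eventually_eq ?_
  filter_upwards [eventually_gt_atTop j] with k hk
  have := congrArg (·.getD j 0) (h k)
  rwa [getD_initSeg _ hk, getD_initSeg _ hk] at this

lemma measurable_comp_initSeg {β : Type*} [MeasurableSpace β] (G : List ℕ → β) (k : ℕ) :
    Measurable fun z : ℕ → ℕ => G (initSeg z k) :=
  (measurable_of_countable fun v : Fin k → ℕ => G (List.ofFn v)).comp
    (measurable_pi_lambda _ fun i => measurable_pi_apply (i : ℕ))

lemma List.IsPrefix.getD_eq {s t : List ℕ} (h : s <+: t) {j : ℕ} (hj : j < s.length) :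
    t.getD j 0 = s.getD j 0 := by
  obtain ⟨u, rfl⟩ := h
  exact List.getD_append _ _ _ _ hj

def IsPrefixClosed (S : Set (List ℕ)) : Prop := ∀ ⦃σ τ : List ℕ⦄, τ <+: σ → σ ∈ S → τ ∈ S

def HasBranch (S : Set (List ℕ)) : Prop := ∃ z : ℕ → ℕ, ∀ k, initSeg z k ∈ S

lemma hasBranch_of_chain {S : Set (List ℕ)} (hS : IsPrefixClosed S) {σ : ℕ → List ℕ}
    (hmem : ∀ n, σ n ∈ S) (hchain : ∀ n, σ n <+: σ (n + 1)) (hlen : ∀ n, n ≤ (σ n).length) :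
    HasBranch S := by
  have hmono : ∀ {m n}, m ≤ n → σ m <+: σ n := fun {m n} hmn => by
    induction n, hmn using Nat.le_induction with
    | base => exact List.prefix_refl _
    | succ n _ ih => exact ih.trans (hchain n)
  refine ⟨fun j => (σ (j + 1)).getD j 0, fun k => hS ?_ (hmem k)⟩
  have : initSeg (fun j => (σ (j + 1)).getD j 0) k = (σ k).take k := by
    refine List.ext_getElem (by simp [hlen k]) fun j hj _ => ?_
    simp only [getElem_initSeg, List.getElem_take]
    have hj : j < k := by simpa using hj
    have hj' : j < (σ (j + 1)).length := by have := hlen (j + 1); omega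
    rw [List.getD_eq_getElem _ _ hj', (hmono (Nat.succ_le_of_lt hj)).getElem hj']
  rw [this]
  exact List.take_prefix _ _

section Coding

variable {α : Type*} [Encodable α]

open Classical in
def codeOf (S : Set α) : ℕ → ℕ := fun m => if ∃ a ∈ S, Encodable.encode a = m then 1 else 0

lemma codeOf_encode_eq_one {S : Set α} {a : α} : codeOf S (Encodable.encode a) = 1 ↔ a ∈ S := by
  simp [codeOf, Encodable.encode_injective.eq_iff]

lemma measurable_codeOf {Z : Type*} [MeasurableSpace Z] {S : Z → Set α}
    (hS : ∀ a, MeasurableSet {x | a ∈ S x}) : Measurable fun x => codeOf (S x) := by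
  refine measurable_pi_lambda _ fun m => Measurable.ite ?_ measurable_const measurable_const
  exact measurableSet_setOfPred.2 <| Measurable.exists fun a =>
    (measurableSet_setOfPred.1 (hS a)).and measurable_const

end Coding

def treeOf (y : ℕ → ℕ) : Set (List ℕ) := {σ | ∀ τ, τ <+: σ → y (Encodable.encode τ) = 1}

lemma isPrefixClosed_treeOf (y : ℕ → ℕ) : IsPrefixClosed (treeOf y) :=
  fun _ _ hτσ hσ ρ hρ => hσ ρ (hρ.trans hτσ)

lemma treeOf_codeOf {S : Set (List ℕ)} (hS : IsPrefixClosed S) : treeOf (codeOf S) = S :=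
  Set.ext fun σ => ⟨fun h => codeOf_encode_eq_one.1 (h σ (List.prefix_refl σ)),
    fun hσ _ hτ => codeOf_encode_eq_one.2 (hS hτ hσ)⟩

lemma not_hasBranch_treeOf_of_eventually_eq {ι : Type*} {S : ι → Set (List ℕ)}
    (hS : ∀ i, IsPrefixClosed (S i)) (hb : ∀ i, ¬ HasBranch (S i)) {y : ℕ → ℕ} {F : Finset ι}
    {n : ℕ} (hy : ∀ j ≥ n, ∃ i ∈ F, y j = codeOf (S i) j) : ¬ HasBranch (treeOf y) := by
  rintro ⟨z, hz⟩
  have hcode : Tendsto (fun k => Encodable.encode (initSeg z k)) atTop atTop :=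
    (Encodable.encode_injective.comp (initSeg_injective z)).nat_tendsto_atTop
  have hev : ∀ᶠ k in atTop, ∃ i ∈ F, initSeg z k ∈ S i := by
    filter_upwards [hcode.eventually_ge_atTop n] with k hk
    obtain ⟨i, hi, hyi⟩ := hy _ hk
    exact ⟨i, hi, codeOf_encode_eq_one.1 (hyi ▸ hz k _ (List.prefix_refl _))⟩
  obtain ⟨i, -, hi⟩ := (F.frequently_exists).1 hev.frequently
  refine hb i ⟨z, fun k => ?_⟩
  obtain ⟨k', hkk', hk'⟩ := frequently_atTop.1 hi k
  exact hS i (initSeg_prefix_initSeg z hkk') hk'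

def IsTreeEmbedding (f : List ℕ → List ℕ) (S S' : Set (List ℕ)) : Prop :=
  (∀ σ ∈ S, f σ ∈ S') ∧ ∀ σ k, σ ++ [k] ∈ S → f σ <+: f (σ ++ [k]) ∧ f σ ≠ f (σ ++ [k])

lemma HasBranch.of_isTreeEmbedding {S S' : Set (List ℕ)} {f : List ℕ → List ℕ}
    (hS' : IsPrefixClosed S') (hf : IsTreeEmbedding f S S') (hS : HasBranch S) :
    HasBranch S' := by
  obtain ⟨z, hz⟩ := hS
  have hstep : ∀ k, f (initSeg z k) <+: f (initSeg z (k + 1)) ∧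
      f (initSeg z k) ≠ f (initSeg z (k + 1)) := fun k => by
    rw [initSeg_succ_eq_concat]
    exact hf.2 _ _ (initSeg_succ_eq_concat z k ▸ hz (k + 1))
  refine hasBranch_of_chain hS' (fun k => hf.1 _ (hz k)) (fun k => (hstep k).1) fun k => ?_
  induction k with
  | zero => exact Nat.zero_le _
  | succ k ih =>
    have := (hstep k).1.length_le
    have := mt (hstep k).1.eq_of_length (hstep k).2
    omega

def ChildRel (S : Set (List ℕ)) (τ σ : List ℕ) : Prop := τ ∈ S ∧ ∃ n, τ = σ ++ [n]

lemma wellFounded_childRel {S : Set (List ℕ)} (hS : IsPrefixClosed S) (hb : ¬ HasBranch S) :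
    WellFounded (ChildRel S) := by
  rw [wellFounded_iff_isEmpty_descending_chain]
  refine ⟨fun ⟨σ, hσ⟩ => hb ?_⟩
  have hlen : ∀ n, (σ (n + 1)).length = (σ 1).length + n := fun n => by
    induction n with
    | zero => rfl
    | succ n ih =>
      obtain ⟨-, m, hm⟩ := hσ (n + 1)
      rw [hm, List.length_append, ih, List.length_singleton]
      omega
  refine hasBranch_of_chain hS (σ := fun n => σ (n + 1)) (fun n => (hσ n).1) (fun n => ?_)
    fun n => by rw [hlen]; omega
  obtain ⟨-, m, hm⟩ := hσ (n + 1)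
  exact hm ▸ List.prefix_append _ _

/-! ### A cofinal `ω₁`-sequence of well-founded trees -/

abbrev Omega1 : Type := (Cardinal.aleph 1).ord.ToType

instance : Nonempty Omega1 := Cardinal.nonempty_ord_toType (Cardinal.aleph_pos 1).ne'

lemma countable_Iic_omega1 (i : Omega1) : (Set.Iic i).Countable := by
  have : Cardinal.mk (Set.Iio i) < Cardinal.aleph 1 := by simpa using Cardinal.mk_Iio_lt i
  rw [← Set.Iio_insert]
  exact (Cardinal.le_aleph0_iff_set_countable.1 (Cardinal.lt_aleph_one_iff.1 this)).insert i

lemma exists_forall_lt_omega1 (g : ℕ → Omega1) : ∃ i, ∀ n, g n < i := by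
  have hcof : Order.cof Omega1 = Cardinal.aleph 1 := by
    rw [Ordinal.cof_toType, Cardinal.isRegular_aleph_one.cof_ord]
  have hsmall : Cardinal.mk (Set.range g) < Order.cof Omega1 := by
    rw [hcof, Cardinal.lt_aleph_one_iff, Cardinal.le_aleph0_iff_set_countable]
    exact Set.countable_range g
  by_contra! h
  exact hsmall.not_ge (Order.cof_le fun i => by
    obtain ⟨n, hn⟩ := h i
    exact ⟨g n, Set.mem_range_self n, hn⟩)

def enumIic (i : Omega1) : ℕ → Omega1 :=
  ((countable_Iic_omega1 i).exists_eq_range Set.nonempty_Iic).choose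

lemma range_enumIic (i : Omega1) : Set.range (enumIic i) = Set.Iic i :=
  ((countable_Iic_omega1 i).exists_eq_range Set.nonempty_Iic).choose_spec.symm

-- `Iic i` is enumerated rather than `Iio i`, which may be empty; the test `< i` discards `i`.
def RankMem : List ℕ → Omega1 → Prop
  | [], _ => True
  | n :: l, i => enumIic i n < i ∧ RankMem l (enumIic i n)

def rankTree (i : Omega1) : Set (List ℕ) := {l | RankMem l i}

@[simp] lemma nil_mem_rankTree (i : Omega1) : [] ∈ rankTree i := trivial

@[simp] lemma cons_mem_rankTree {i : Omega1} {n : ℕ} {l : List ℕ} :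
    n :: l ∈ rankTree i ↔ enumIic i n < i ∧ l ∈ rankTree (enumIic i n) := Iff.rfl

lemma isPrefixClosed_rankTree (i : Omega1) : IsPrefixClosed (rankTree i) := by
  intro σ τ hτσ hσ
  induction τ generalizing σ i with
  | nil => trivial
  | cons m τ ih =>
    obtain ⟨σ', rfl⟩ : ∃ σ', σ = m :: σ' := by
      obtain ⟨t, rfl⟩ := hτσ; exact ⟨τ ++ t, rfl⟩
    obtain ⟨hlt, hσ'⟩ := cons_mem_rankTree.1 hσ
    exact ⟨hlt, ih _ (List.cons_prefix_cons.1 hτσ).2 hσ'⟩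

lemma not_hasBranch_rankTree (i : Omega1) : ¬ HasBranch (rankTree i) := by
  induction i using WellFoundedLT.induction with
  | _ i ih =>
    rintro ⟨z, hz⟩
    have hshift : ∀ k, enumIic i (z 0) < i ∧
        initSeg (fun j => z (j + 1)) k ∈ rankTree (enumIic i (z 0)) := fun k => by
      simpa [initSeg_succ] using hz (k + 1)
    exact ih _ (hshift 0).1 ⟨_, fun k => (hshift k).2⟩

def subtreeAt (S : Set (List ℕ)) (σ : List ℕ) : Set (List ℕ) := {l | σ ++ l ∈ S}

lemma exists_isTreeEmbedding_rankTree {S : Set (List ℕ)} (hS : IsPrefixClosed S)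
    (hb : ¬ HasBranch S) : ∃ i f, IsTreeEmbedding f S (rankTree i) := by
  suffices ∀ σ, ∃ i f, IsTreeEmbedding f (subtreeAt S σ) (rankTree i) by
    simpa [subtreeAt] using this []
  intro σ
  induction σ using (wellFounded_childRel hS hb).induction with
  | _ σ ih =>
    have hchild : ∀ n, ∃ i f, IsTreeEmbedding f (subtreeAt S (σ ++ [n])) (rankTree i) := by
      intro n
      by_cases hn : σ ++ [n] ∈ S
      · exact ih _ ⟨hn, n, rfl⟩
      · have hempty : ∀ l, l ∉ subtreeAt S (σ ++ [n]) := fun l hl =>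
          hn (hS (List.prefix_append _ _) hl)
        exact ⟨Classical.arbitrary _, id, fun l hl => (hempty l hl).elim,
          fun l k hl => (hempty _ hl).elim⟩
    choose g f hf using hchild
    obtain ⟨i, hi⟩ := exists_forall_lt_omega1 g
    have hname : ∀ n, ∃ m, enumIic i m = g n := fun n => by
      rw [← Set.mem_range, range_enumIic]
      exact (hi n).le
    choose name hname using hname
    refine ⟨i, fun | [] => [] | n :: l => name n :: f n l, fun l hl => ?_, fun l k hl => ?_⟩
    · rcases l with _ | ⟨n, l⟩
      · exact nil_mem_rankTree i
      · exact ⟨hname n ▸ hi n, hname n ▸ (hf n).1 l (by simpa [subtreeAt] using hl)⟩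
    · rcases l with _ | ⟨n, l⟩
      · simp
      · have := (hf n).2 l k (by simpa [subtreeAt] using hl)
        simpa using this

def rankCode (i : Omega1) : ℕ → ℕ := codeOf (rankTree i)

/-! ### Analytic sets -/

section Analytic

variable {X Y : Type*} [TopologicalSpace X] [TopologicalSpace Y]

lemma MeasureTheory.AnalyticSet.inter [T2Space X] {s t : Set X} (hs : AnalyticSet s)
    (ht : AnalyticSet t) : AnalyticSet (s ∩ t) := by
  rw [Set.inter_eq_iInter]
  exact AnalyticSet.iInter fun b => by cases b <;> assumption

lemma MeasureTheory.AnalyticSet.union {s t : Set X} (hs : AnalyticSet s) (ht : AnalyticSet t) :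
    AnalyticSet (s ∪ t) := by
  rw [Set.union_eq_iUnion]
  exact AnalyticSet.iUnion fun b => by cases b <;> assumption

variable [PolishSpace X] [MeasurableSpace X] [BorelSpace X]
  [PolishSpace Y] [MeasurableSpace Y] [BorelSpace Y]

lemma MeasureTheory.AnalyticSet.preimage_of_measurable {s : Set Y} (hs : AnalyticSet s)
    {f : X → Y} (hf : Measurable f) : AnalyticSet (f ⁻¹' s) := by
  have hgraph : MeasurableSet {p : X × Y | f p.1 = p.2} :=
    measurableSet_eq_fun (hf.comp measurable_fst) measurable_snd
  have : f ⁻¹' s = Prod.fst '' ({p : X × Y | f p.1 = p.2} ∩ Prod.snd ⁻¹' s) := by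
    ext x; simp
  rw [this]
  exact ((hgraph.analyticSet).inter (hs.preimage continuous_snd)).image_of_continuous
    continuous_fst

end Analytic

lemma MeasureTheory.AnalyticSet.setOf_exists_forall_mem_iff {X Y ι : Type*}
    [TopologicalSpace X] [PolishSpace X] [MeasurableSpace X] [BorelSpace X]
    [TopologicalSpace Y] [PolishSpace Y] [Countable ι] [Nonempty ι]
    {A : ι → Set X} {Q : Set Y} {C : ι → Set Y} (hA : ∀ s, MeasurableSet (A s))
    (hQ : AnalyticSet Q) (hC : ∀ s, AnalyticSet (Q ∩ C s)) (hC' : ∀ s, AnalyticSet (Q \ C s)) :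
    AnalyticSet {x | ∃ q ∈ Q, ∀ s, x ∈ A s ↔ q ∈ C s} := by
  have : {x | ∃ q ∈ Q, ∀ s, x ∈ A s ↔ q ∈ C s} = Prod.fst '' (Prod.snd ⁻¹' Q ∩
      ⋂ s, ((Prod.fst ⁻¹' A s)ᶜ ∪ Prod.snd ⁻¹' (Q ∩ C s)) ∩
        (Prod.fst ⁻¹' A s ∪ Prod.snd ⁻¹' (Q \ C s))) := by
    ext x
    simp only [Set.mem_ofPred_eq, Set.mem_image, Set.mem_inter_iff, Set.mem_preimage,
      Set.mem_iInter, Set.mem_union, Set.mem_compl_iff, Set.mem_sdiff, Prod.exists,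
      exists_and_right, exists_eq_right]
    refine exists_congr fun q => and_congr_right fun hq => forall_congr' fun s => ?_
    tauto
  rw [this]
  have hmeas : ∀ s, AnalyticSet (Prod.fst ⁻¹' A s : Set (X × Y)) := fun s =>
    (hA s).analyticSet.preimage continuous_fst
  have hmeas' : ∀ s, AnalyticSet (Prod.fst ⁻¹' A s : Set (X × Y))ᶜ := fun s =>
    (hA s).compl.analyticSet.preimage continuous_fst
  refine ((hQ.preimage continuous_snd).inter (AnalyticSet.iInter fun s => ?_)).image_of_continuous
    continuous_fst
  exact ((hmeas' s).union ((hC s).preimage continuous_snd)).inter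
    ((hmeas s).union ((hC' s).preimage continuous_snd))

lemma measurable_apply_apply {Z : Type*} [MeasurableSpace Z] {c : Z → ℕ → ℕ} {φ : Z → ℕ}
    (hc : Measurable c) (hφ : Measurable φ) : Measurable fun x => c x (φ x) :=
  (measurable_from_prod_countable_left (f := fun p : (ℕ → ℕ) × ℕ => p.1 p.2)
    fun n => measurable_pi_apply n).comp (hc.prodMk hφ)

/-- The `c`-th section of a universal analytic set is `{y | HasBranch (sectionTree c y)}`. -/
def sectionTree (c y : ℕ → ℕ) : Set (List ℕ) :=
  {u | ∀ k ≤ u.length, c (Encodable.encode (initSeg y k, u.take k)) = 1}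

lemma isPrefixClosed_sectionTree (c y : ℕ → ℕ) : IsPrefixClosed (sectionTree c y) := by
  rintro σ τ ⟨t, rfl⟩ hσ k hk
  simpa [List.take_append_of_le_length hk] using
    hσ k (hk.trans (List.prefix_append τ t).length_le)

lemma hasBranch_sectionTree_iff (c y : ℕ → ℕ) : HasBranch (sectionTree c y) ↔
    ∃ z, ∀ k, c (Encodable.encode (initSeg y k, initSeg z k)) = 1 := by
  refine exists_congr fun z => ⟨fun h k => ?_, fun h K k hk => ?_⟩
  · simpa [take_initSeg] using h k k (by simp)
  · simpa [take_initSeg z (by simpa using hk : k ≤ K)] using h k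

lemma exists_code_of_isClosed {R : Set ((ℕ → ℕ) × (ℕ → ℕ))} (hR : IsClosed R) :
    ∃ c, ∀ y, (∃ z, (y, z) ∈ R) ↔ HasBranch (sectionTree c y) := by
  refine ⟨codeOf {uv : List ℕ × List ℕ | ∃ p ∈ R, ∃ k, (initSeg p.1 k, initSeg p.2 k) = uv},
    fun y => ?_⟩
  simp only [hasBranch_sectionTree_iff, codeOf_encode_eq_one, Set.mem_ofPred_eq]
  refine exists_congr fun z => ⟨fun hz k => ⟨(y, z), hz, k, rfl⟩, fun h => ?_⟩
  have h' : ∀ k, ∃ p ∈ R, initSeg p.1 k = initSeg y k ∧ initSeg p.2 k = initSeg z k := by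
    intro k
    obtain ⟨p, hp, k', hk'⟩ := h k
    obtain ⟨h1, h2⟩ := Prod.ext_iff.1 hk'
    obtain rfl : k' = k := by simpa using congrArg List.length h1
    exact ⟨p, hp, h1, h2⟩
  choose p hpR hp1 hp2 using h'
  exact hR.mem_of_tendsto ((tendsto_of_initSeg_eq hp1).prodMk_nhds (tendsto_of_initSeg_eq hp2))
    (Eventually.of_forall hpR)

lemma exists_code_of_analyticSet {A : Set (ℕ → ℕ)} (hA : AnalyticSet A) :
    ∃ c, ∀ y, y ∈ A ↔ HasBranch (sectionTree c y) := by
  rw [AnalyticSet] at hA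
  rcases hA with rfl | ⟨f, hf, rfl⟩
  · simpa using exists_code_of_isClosed isClosed_empty
  · obtain ⟨c, hc⟩ := exists_code_of_isClosed (isClosed_eq (hf.comp continuous_snd) continuous_fst)
    exact ⟨c, fun y => by simpa using hc y⟩

lemma measurable_codeOf_sectionTree_self : Measurable fun c => codeOf (sectionTree c c) :=
  measurable_codeOf fun u => measurableSet_setOfPred.2 <| Measurable.forall fun k =>
    measurable_const.imp <| (measurable_apply_apply measurable_id
      (measurable_comp_initSeg (fun v => Encodable.encode (v, u.take k)) k)).eq_const 1

theorem not_analyticSet_setOf_not_hasBranch :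
    ¬ AnalyticSet {y : ℕ → ℕ | ¬ HasBranch (treeOf y)} := by
  intro hW
  have hdiag : AnalyticSet {c : ℕ → ℕ | ¬ HasBranch (sectionTree c c)} := by
    simpa [Set.preimage, treeOf_codeOf (isPrefixClosed_sectionTree _ _)] using
      hW.preimage_of_measurable measurable_codeOf_sectionTree_self
  obtain ⟨c, hc⟩ := exists_code_of_analyticSet hdiag
  exact not_iff_self (hc c)

def decodeFun (h : ℕ → ℕ) (σ : List ℕ) : List ℕ :=
  (Encodable.decode (h (Encodable.encode σ))).getD []

lemma decodeFun_surjective : Function.Surjective decodeFun := fun f =>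
  ⟨fun m => Encodable.encode (f ((Encodable.decode m).getD [])), funext fun σ => by
    simp [decodeFun]⟩

lemma measurable_decodeFun_apply {Z : Type*} [MeasurableSpace Z] {h : Z → ℕ → ℕ}
    (hh : Measurable h) (σ σ' : List ℕ) (G : List ℕ → List ℕ → Prop) :
    Measurable fun x => G (decodeFun (h x) σ) (decodeFun (h x) σ') :=
  (measurable_of_countable fun n : ℕ × ℕ =>
    G ((Encodable.decode n.1).getD []) ((Encodable.decode n.2).getD [])).comp
    (((measurable_pi_apply _).comp hh).prodMk ((measurable_pi_apply _).comp hh))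

lemma measurable_mem_treeOf {Z : Type*} [MeasurableSpace Z] {y : Z → ℕ → ℕ} (hy : Measurable y)
    {u : Z → List ℕ} (hu : ∀ τ, Measurable fun x => τ <+: u x) :
    Measurable fun x => u x ∈ treeOf (y x) :=
  Measurable.forall fun τ => (hu τ).imp (((measurable_pi_apply _).comp hy).eq_const 1)

lemma MeasureTheory.AnalyticSet.setOf_exists_isTreeEmbedding {B : Set (ℕ → ℕ)}
    (hB : AnalyticSet B) :
    AnalyticSet {y | ∃ y' ∈ B, ∃ f, IsTreeEmbedding f (treeOf y) (treeOf y')} := by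
  have : {y | ∃ y' ∈ B, ∃ f, IsTreeEmbedding f (treeOf y) (treeOf y')} = Prod.fst ''
      ((fun p : (ℕ → ℕ) × ((ℕ → ℕ) × (ℕ → ℕ)) => p.2.1) ⁻¹' B ∩
        {p | IsTreeEmbedding (decodeFun p.2.2) (treeOf p.1) (treeOf p.2.1)}) := by
    ext y
    simp only [Set.mem_ofPred_eq, Set.mem_image, Set.mem_inter_iff, Set.mem_preimage,
      Prod.exists, exists_and_right, exists_eq_right, decodeFun_surjective.exists]
    exact ⟨fun ⟨y', hy', h, hh⟩ => ⟨y', h, hy', hh⟩, fun ⟨y', h, hy', hh⟩ => ⟨y', hy', h, hh⟩⟩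
  rw [this]
  have : BorelSpace ((ℕ → ℕ) × ((ℕ → ℕ) × (ℕ → ℕ))) := Prod.borelSpace
  have hmeas : MeasurableSet
      {p : (ℕ → ℕ) × ((ℕ → ℕ) × (ℕ → ℕ)) |
        IsTreeEmbedding (decodeFun p.2.2) (treeOf p.1) (treeOf p.2.1)} := by
    have hdec := measurable_decodeFun_apply (measurable_snd.snd :
      Measurable fun p : (ℕ → ℕ) × ((ℕ → ℕ) × (ℕ → ℕ)) => p.2.2)
    have hsrc : ∀ σ, Measurable fun p : (ℕ → ℕ) × ((ℕ → ℕ) × (ℕ → ℕ)) => σ ∈ treeOf p.1 :=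
      fun σ => measurable_mem_treeOf measurable_fst fun τ => measurable_const
    have htgt : ∀ σ, Measurable fun p : (ℕ → ℕ) × ((ℕ → ℕ) × (ℕ → ℕ)) =>
        decodeFun p.2.2 σ ∈ treeOf p.2.1 :=
      fun σ => measurable_mem_treeOf measurable_snd.fst fun τ => hdec σ σ fun a _ => τ <+: a
    exact measurableSet_setOfPred.2 <|
      (Measurable.forall fun σ => (hsrc σ).imp (htgt σ)).and <| Measurable.forall fun σ =>
        Measurable.forall fun k => (hsrc _).imp (hdec σ (σ ++ [k]) fun a b => a <+: b ∧ a ≠ b)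
  exact ((hB.preimage (by fun_prop)).inter hmeas.analyticSet).image_of_continuous continuous_fst

/-! ### The eventually different forcing -/

def Avoids (s : List ℕ) (y : ℕ → ℕ) : Prop := ∀ j < s.length, s.getD j 0 ≠ y j

/-- Conditions of the forcing adding a real eventually different from each `x i`: a finite stem
and finitely many indices `i` whose reals the stem must avoid from now on. -/
abbrev EvDiff (ι : Type) : Type := List ℕ × Finset ι

namespace EvDiff

variable {ι : Type} (x : ι → ℕ → ℕ)

def le (p q : EvDiff ι) : Prop :=
  p.1 <+: q.1 ∧ p.2 ⊆ q.2 ∧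
    ∀ j, p.1.length ≤ j → j < q.1.length → ∀ i ∈ p.2, q.1.getD j 0 ≠ x i j

lemma le_refl (p : EvDiff ι) : le x p p :=
  ⟨List.prefix_refl _, subset_rfl, fun _ h₁ h₂ => absurd h₂ (not_lt.2 h₁)⟩

lemma le_trans {p q r : EvDiff ι} (hpq : le x p q) (hqr : le x q r) : le x p r := by
  refine ⟨hpq.1.trans hqr.1, hpq.2.1.trans hqr.2.1, fun j hpj hjr i hi => ?_⟩
  by_cases hqj : j < q.1.length
  · rw [hqr.1.getD_eq hqj]
    exact hpq.2.2 j hpj hqj i hi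
  · exact hqr.2.2 j (not_lt.1 hqj) hjr i (hpq.2.1 hi)

lemma le_antisymm {p q : EvDiff ι} (hpq : le x p q) (hqp : le x q p) : p = q :=
  Prod.ext (hpq.1.eq_of_length (hpq.1.length_le.antisymm hqp.1.length_le))
    (hpq.2.1.antisymm hqp.2.1)

lemma sigmaCentered : PSigmaCentered (le x) := by
  classical
  refine ⟨fun n => {p | Encodable.encode p.1 = n}, fun p => ⟨_, rfl⟩, fun n F hF => ?_⟩
  refine ⟨((Encodable.decode n).getD [], F.sup Prod.snd), fun p hp => ?_⟩
  have hstem : (Encodable.decode n).getD [] = p.1 := by rw [← hF hp, Encodable.encodek]; rfl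
  rw [hstem]
  exact ⟨List.prefix_refl _, Finset.le_sup (f := Prod.snd) hp,
    fun _ h₁ h₂ => absurd h₂ (not_lt.2 h₁)⟩

lemma stem_le_iff {s : List ℕ} {p : EvDiff ι} : le x (s, ∅) p ↔ s <+: p.1 :=
  ⟨fun h => h.1, fun h => ⟨h, Finset.empty_subset _, fun _ _ _ _ hi => absurd hi (by simp)⟩⟩

lemma compat_iff_avoids (i : ι) (s : List ℕ) :
    PCompat (le x) ([], {i}) (s, ∅) ↔ Avoids s (x i) := by
  constructor
  · rintro ⟨r, hir, hsr⟩ j hj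
    have hsr := (stem_le_iff x).1 hsr
    rw [← hsr.getD_eq hj]
    exact hir.2.2 j (Nat.zero_le _) (hj.trans_le hsr.length_le) i (Finset.mem_singleton_self i)
  · intro hs
    refine ⟨(s, {i}), ⟨List.nil_prefix, subset_rfl, fun j _ hj i' hi' => ?_⟩,
      (stem_le_iff x).2 (List.prefix_refl s)⟩
    rw [Finset.mem_singleton.1 hi']
    exact hs j hj

lemma exists_le_not_avoids {y : ℕ → ℕ} (hy : ∀ (F : Finset ι) n, ∃ j ≥ n, ∀ i ∈ F, y j ≠ x i j)
    (p : EvDiff ι) : ∃ q, le x p q ∧ ¬ Avoids q.1 y := by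
  classical
  obtain ⟨s, F⟩ := p
  obtain ⟨j, hsj, hj⟩ := hy F s.length
  let w : ℕ → ℕ := fun m =>
    if m < s.length then s.getD m 0 else if m = j then y j else F.sup (x · m) + 1
  have hs : initSeg w s.length = s := initSeg_eq_self_of_getD w s fun m hm => if_pos hm
  refine ⟨(initSeg w (j + 1), F), ⟨hs ▸ initSeg_prefix_initSeg w (by omega), subset_rfl,
    fun m hsm hm i hi => ?_⟩, fun h => h j (by simp) ?_⟩
  · rw [getD_initSeg w (by simpa using hm)]
    simp only [w, if_neg (not_lt.2 hsm)]
    split_ifs with hmj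
    · exact hmj ▸ hj i hi
    · exact (Nat.lt_succ_of_le (Finset.le_sup (f := (x · m)) hi)).ne'
  · rw [getD_initSeg w (by omega)]
    simp [w, not_lt.2 hsj]

end EvDiff

/-! ### Complete embeddings into ccc Souslin forcings -/

section CompleteEmbedding

variable {P : Type} {leP : P → P → Prop}

lemma PCompat.symm {p q : P} (h : PCompat leP p q) : PCompat leP q p :=
  let ⟨r, hpr, hqr⟩ := h; ⟨r, hqr, hpr⟩

lemma exists_pMaxAntichain_subset (hrefl : ∀ p, leP p p)
    (htrans : ∀ p q r, leP p q → leP q r → leP p r) {D : Set P} (hD : ∀ p, ∃ q ∈ D, leP p q) :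
    ∃ A ⊆ D, PMaxAntichain leP A := by
  obtain ⟨M, hM⟩ := zorn_subset {A : Set P | A ⊆ D ∧ A.Pairwise fun p q => ¬ PCompat leP p q}
    fun c hc hchain => ⟨⋃₀ c, ⟨Set.sUnion_subset fun A hA => (hc hA).1,
      (Set.pairwise_sUnion hchain.directedOn).2 fun A hA => (hc hA).2⟩,
      fun A hA => Set.subset_sUnion_of_mem hA⟩
  refine ⟨M, hM.prop.1, hM.prop.2, fun p => ?_⟩
  obtain ⟨d, hdD, hpd⟩ := hD p
  by_contra! hp
  have hd : ∀ q ∈ M, ¬ PCompat leP d q := fun q hq ⟨r, hdr, hqr⟩ =>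
    hp q hq ⟨r, htrans _ _ _ hpd hdr, hqr⟩
  have hdM : d ∈ M := hM.mem_of_prop_insert ⟨Set.insert_subset hdD hM.prop.1,
    hM.prop.2.insert fun q hq _ => ⟨hd q hq, fun h => hd q hq h.symm⟩⟩
  exact hd d hdM ⟨d, hrefl d, hrefl d⟩

lemma QCompat.of_le_right {T : SouslinCCC} {q a b : ℕ → ℕ} (h : QCompat T.Q T.le q a)
    (ha : a ∈ T.Q) (hb : b ∈ T.Q) (hba : T.le b a) : QCompat T.Q T.le q b :=
  let ⟨r, hr, hqr, har⟩ := h; ⟨r, hr, hqr, T.trans b hb a ha r hr hba har⟩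

lemma CompleteEmbedding.exists_qCompat_of_dense {T : SouslinCCC} {e : P → ℕ → ℕ}
    (he : CompleteEmbedding leP T e) (hrefl : ∀ p, leP p p)
    (htrans : ∀ p q r, leP p q → leP q r → leP p r) {D : Set P} (hD : ∀ p, ∃ q ∈ D, leP p q)
    {q : ℕ → ℕ} (hq : q ∈ T.Q) : ∃ p ∈ D, QCompat T.Q T.le q (e p) := by
  obtain ⟨A, hAD, hA⟩ := exists_pMaxAntichain_subset hrefl htrans hD
  obtain ⟨_, ⟨p, hpA, rfl⟩, hqp⟩ := (he.2.2.2 A hA).2.2 q hq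
  exact ⟨p, hAD hpA, hqp⟩

end CompleteEmbedding

namespace SouslinCCC

variable (T : SouslinCCC) {p : ℕ → ℕ}

lemma analyticSet_inter_compat (hp : p ∈ T.Q) :
    AnalyticSet (T.Q ∩ {q | QCompat T.Q T.le q p}) := by
  have : T.Q ∩ {q | QCompat T.Q T.le q p} = Prod.fst ''
      ({x | x.1 ∈ T.Q ∧ x.2 ∈ T.Q ∧ T.le x.1 x.2} ∩
        Prod.snd ⁻¹' ((fun r => (p, r)) ⁻¹' {x | x.1 ∈ T.Q ∧ x.2 ∈ T.Q ∧ T.le x.1 x.2})) := by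
    ext q
    simp only [QCompat, Set.mem_inter_iff, Set.mem_ofPred_eq, Set.mem_image, Set.mem_preimage,
      Prod.exists, exists_and_right, exists_eq_right]
    exact ⟨fun ⟨hq, r, hr, hqr, hpr⟩ => ⟨r, ⟨hq, hr, hqr⟩, hp, hr, hpr⟩,
      fun ⟨r, ⟨hq, hr, hqr⟩, _, _, hpr⟩ => ⟨hq, r, hr, hqr, hpr⟩⟩
  rw [this]
  exact (T.analytic_le.inter ((T.analytic_le.preimage (by fun_prop)).preimage
    continuous_snd)).image_of_continuous continuous_fst

lemma analyticSet_diff_compat (hp : p ∈ T.Q) :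
    AnalyticSet (T.Q \ {q | QCompat T.Q T.le q p}) := by
  have : T.Q \ {q | QCompat T.Q T.le q p} = (fun q => (q, p)) ⁻¹'
      {x | x.1 ∈ T.Q ∧ x.2 ∈ T.Q ∧ ¬ QCompat T.Q T.le x.1 x.2} := by
    ext q
    simp [hp]
  rw [this]
  exact T.analytic_incompat.preimage (by fun_prop)

end SouslinCCC

variable {ι : Type} {x : ι → ℕ → ℕ} {T : SouslinCCC} {e : EvDiff ι → ℕ → ℕ}

def patternSet (T : SouslinCCC) (e : EvDiff ι → ℕ → ℕ) : Set (ℕ → ℕ) :=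
  {y | ∃ q ∈ T.Q, ∀ s, Avoids s y ↔ QCompat T.Q T.le q (e (s, ∅))}

lemma CompleteEmbedding.mem_patternSet (he : CompleteEmbedding (EvDiff.le x) T e) (i : ι) :
    x i ∈ patternSet T e :=
  ⟨e ([], {i}), he.1 _, fun s => (EvDiff.compat_iff_avoids x i s).symm.trans
    (not_iff_not.1 (he.2.2.1 _ _))⟩

lemma CompleteEmbedding.eventually_eq_of_mem_patternSet
    (he : CompleteEmbedding (EvDiff.le x) T e) {y : ℕ → ℕ} (hy : y ∈ patternSet T e) :
    ∃ (F : Finset ι) (n : ℕ), ∀ j ≥ n, ∃ i ∈ F, y j = x i j := by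
  obtain ⟨q, hq, hpat⟩ := hy
  by_contra! hcov
  obtain ⟨p, hp, hqp⟩ := he.exists_qCompat_of_dense (EvDiff.le_refl x)
    (fun _ _ _ => EvDiff.le_trans x) (fun p => (EvDiff.exists_le_not_avoids x hcov p).imp
      fun _ h => ⟨h.2, h.1⟩) hq
  exact hp ((hpat p.1).2 (hqp.of_le_right (he.1 _) (he.1 _)
    (he.2.1 _ _ ((EvDiff.stem_le_iff x).2 (List.prefix_refl _)))))

lemma CompleteEmbedding.analyticSet_patternSet (he : CompleteEmbedding (EvDiff.le x) T e) :
    AnalyticSet (patternSet T e) :=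
  AnalyticSet.setOf_exists_forall_mem_iff
    (fun s => measurableSet_setOfPred.2 (by fun_prop)) T.analytic_cond
    (fun s => T.analyticSet_inter_compat (he.1 _)) (fun s => T.analyticSet_diff_compat (he.1 _))

theorem not_completeEmbedding_evDiff_rankCode (T : SouslinCCC) (e : EvDiff Omega1 → ℕ → ℕ) :
    ¬ CompleteEmbedding (EvDiff.le rankCode) T e := by
  intro he
  have hwf : {y | ¬ HasBranch (treeOf y)} =
      {y | ∃ y' ∈ patternSet T e, ∃ f, IsTreeEmbedding f (treeOf y) (treeOf y')} := by
    ext y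
    refine ⟨fun hy => ?_, fun ⟨y', hy', f, hf⟩ hb => ?_⟩
    · obtain ⟨i, f, hf⟩ := exists_isTreeEmbedding_rankTree (isPrefixClosed_treeOf y) hy
      exact ⟨_, he.mem_patternSet i, f,
        by rwa [rankCode, treeOf_codeOf (isPrefixClosed_rankTree i)]⟩
    · obtain ⟨F, n, hcov⟩ := he.eventually_eq_of_mem_patternSet hy'
      exact not_hasBranch_treeOf_of_eventually_eq isPrefixClosed_rankTree not_hasBranch_rankTree
        hcov (hb.of_isTreeEmbedding (isPrefixClosed_treeOf y') hf)
  exact not_analyticSet_setOf_not_hasBranch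
    (hwf ▸ he.analyticSet_patternSet.setOf_exists_isTreeEmbedding)

theorem exists_small_sigma_centered_not_embeddable_general :
    ∃ (P : Type) (leP : P → P → Prop),
      (∀ p : P, leP p p) ∧
      (∀ p q r : P, leP p q → leP q r → leP p r) ∧
      (∀ p q : P, leP p q → leP q p → p = q) ∧
      PSigmaCentered leP ∧
      Cardinal.mk P = Cardinal.aleph 1 ∧
      ∀ (T : SouslinCCC) (e : P → (ℕ → ℕ)), ¬ CompleteEmbedding leP T e := by
  refine ⟨EvDiff Omega1, EvDiff.le rankCode, EvDiff.le_refl _, fun _ _ _ => EvDiff.le_trans _,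
    fun _ _ => EvDiff.le_antisymm _, EvDiff.sigmaCentered _, ?_,
    not_completeEmbedding_evDiff_rankCode⟩
  have : Infinite Omega1 := Cardinal.infinite_iff.2 (by simp)
  simp

/-- If the continuum is greater than `ℵ₁` then there is a σ-centered forcing notion
(a partial order) of cardinality `ℵ₁` which cannot be completely embedded into any
ccc Souslin forcing notion. -/
theorem exists_small_sigma_centered_not_embeddable
    (hc : Cardinal.aleph 1 < Cardinal.continuum) :
    ∃ (P : Type) (leP : P → P → Prop),
      (∀ p : P, leP p p) ∧
      (∀ p q r : P, leP p q → leP q r → leP p r) ∧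
      (∀ p q : P, leP p q → leP q p → p = q) ∧
      PSigmaCentered leP ∧
      Cardinal.mk P = Cardinal.aleph 1 ∧
      ∀ (T : SouslinCCC) (e : P → (ℕ → ℕ)), ¬ CompleteEmbedding leP T e :=
  exists_small_sigma_centered_not_embeddable_general

end
end
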